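/- arXiv:2602.18612 — 2 statements merged into one kernel-verified Lean document; each statement's English description precedes it below -/
import Mathlib

section
/- Fix ℓ ≥ 1 and ℓ-multicompositions ν and μ of n. There is a bijection from ParMat♭_{ν,μ} to the set BCM_ℓ(ν,μ) of flagged ℓ×ℓ block composition matrices with row sum ν and column sum μ, under which a pair (A,P) with entries a^{(pq)}_{ij} and partitions η^{(pq)}_{ij} corresponds to the block composition matrix B whose entry b^{(pq)}_{ij} satisfies: the sum of the parts of b^{(pq)}_{ij} equals a^{(pq)}_{ij}, and for every t ≥ 1 the t-th part of η^{(pq)}_{ij} equals the sum of the parts of b^{(pq)}_{ij} in positions strictly greater than t. -/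
/-! Common definitions for a level-`ℓ` RSK correspondence.

* The alphabet `S = {a_b}` is encoded by `Letter := Lex (ℕ × ℕ)`, the letter `a_b`
  (with `a, b` now 0-indexed) being `toLex (b, a)`; the lexicographic order on the
  pairs `(b, a)` is exactly the order `1_1 < 2_1 < ⋯ < 1_2 < 2_2 < ⋯` of the paper.
* Compositions are lists of naturals (0-indexed parts, part `t` is `l.getD t 0`);
  partitions are weakly decreasing lists of positive naturals.
* All block/row/column indices `p, q ∈ {1, …, ℓ}` and `i, j, t ≥ 1` of the paper are
  0-indexed here, so e.g. the constraint `length ≤ min(p,q) - 1` becomes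
  `length ≤ min p q` for `p q : Fin ℓ`.
-/

/-- The alphabet `S`: the letter `a_b` is encoded as `toLex (b, a)`. -/
abbrev Letter : Type := Lex (ℕ × ℕ)

/-- The `t`-th row sum of a finitely supported matrix `ℕ × ℕ → ℕ`. -/
def rowSum (M : (ℕ × ℕ) →₀ ℕ) (t : ℕ) : ℕ :=
  ∑ p ∈ M.support, if p.1 = t then M p else 0

/-- The `t`-th column sum of a finitely supported matrix `ℕ × ℕ → ℕ`. -/
def colSum (M : (ℕ × ℕ) →₀ ℕ) (t : ℕ) : ℕ :=
  ∑ p ∈ M.support, if p.2 = t then M p else 0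

/-- `μ` is an `ℓ`-multicomposition of `n`. -/
def IsMultiComp (ℓ n : ℕ) (μ : Fin ℓ → List ℕ) : Prop :=
  ∑ i, (μ i).sum = n

/-- `l` is a partition: a weakly decreasing list of positive integers. -/
def IsPartitionList (l : List ℕ) : Prop :=
  List.Pairwise (· ≥ ·) l ∧ ∀ x ∈ l, 0 < x

/-- `lam` is an `ℓ`-multipartition of `n`. -/
def IsMultiPartition (ℓ n : ℕ) (lam : Fin ℓ → List ℕ) : Prop :=
  (∀ i, IsPartitionList (lam i)) ∧ ∑ i, (lam i).sum = n

/-- The set `ParMat♭_{ν,μ}`: pairs `(A, P)` of an `ℓ × ℓ` block ℕ-matrix `A` with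
`row(A) = ν`, `col(A) = μ`, and a family `P` of partitions `η^{(pq)}_{ij}` with largest part
at most `a^{(pq)}_{ij}` and at most `min(p,q) - 1` parts (`= min p q` in 0-indexed form). -/
def ParMat (ℓ : ℕ) (ν μ : Fin ℓ → List ℕ) :
    Set ((Fin ℓ → Fin ℓ → ((ℕ × ℕ) →₀ ℕ)) × (Fin ℓ → Fin ℓ → ℕ → ℕ → List ℕ)) :=
  {AP | (∀ s t, ∑ q, rowSum (AP.1 s q) t = (ν s).getD t 0) ∧
        (∀ s t, ∑ p, colSum (AP.1 p s) t = (μ s).getD t 0) ∧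
        (∀ p q i j, IsPartitionList (AP.2 p q i j)) ∧
        (∀ p q i j, ∀ x ∈ AP.2 p q i j, x ≤ AP.1 p q (i, j)) ∧
        (∀ p q i j, (AP.2 p q i j).length ≤ min (p : ℕ) (q : ℕ))}

/-- The cells of the Ferrers diagram of a composition `l` (0-indexed):
`(i, j)` with `j < l_i`. -/
def cells (l : List ℕ) : Finset (ℕ × ℕ) :=
  (Finset.range l.length ×ˢ Finset.range (l.foldr max 0)).filter
    (fun p => p.2 < l.getD p.1 0)

/-- `T` is a semistandard tableau of shape `l`: rows weakly increase, columns strictly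
increase, and (as a normalization pinning down the irrelevant values) `T` takes the
default value `d` outside the diagram. -/
def IsSSYT {α : Type*} [LinearOrder α] (l : List ℕ) (d : α) (T : ℕ → ℕ → α) : Prop :=
  (∀ i j, (i, j + 1) ∈ cells l → T i j ≤ T i (j + 1)) ∧
  (∀ i j, (i + 1, j) ∈ cells l → T i j < T (i + 1) j) ∧
  (∀ i j, (i, j) ∉ cells l → T i j = d)

/-- The multiset of entries of a tableau of shape `l`. -/
def entries {α : Type*} (l : List ℕ) (T : ℕ → ℕ → α) : Multiset α :=
  (cells l).val.map (fun p => T p.1 p.2)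

/-- The multiset in which `f a` occurs with multiplicity the `a`-th part of `c`. -/
def contentMultiset {α : Type*} (c : List ℕ) (f : ℕ → α) : Multiset α :=
  (Multiset.range c.length).bind (fun a => Multiset.replicate (c.getD a 0) (f a))

/-- The `μ`-alphabet `U_μ`: the letter `a_b` occurs with multiplicity `μ^{(b)}_a`. -/
def alphabetMultiset (ℓ : ℕ) (μ : Fin ℓ → List ℕ) : Multiset Letter :=
  ∑ b : Fin ℓ, contentMultiset (μ b) (fun a => toLex ((b : ℕ), a))

/-- The set `SST_ℓ(lam, μ)` of semistandard multitableaux of shape `lam` and content `μ`: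
`ℓ`-tuples of semistandard tableaux whose total entry multiset is `U_μ` and such that a
letter `a_b` occurs in the `i`-th tableau only if `b ≥ i` (the flagging condition). -/
def SSTset (ℓ : ℕ) (lam μ : Fin ℓ → List ℕ) : Set (Fin ℓ → ℕ → ℕ → Letter) :=
  {T | (∀ i, IsSSYT (lam i) (toLex (0, 0)) (T i)) ∧
       (∑ i, entries (lam i) (T i)) = alphabetMultiset ℓ μ ∧
       (∀ i : Fin ℓ, ∀ p ∈ cells (lam i), (i : ℕ) ≤ (ofLex (T i p.1 p.2)).1)}

/-- A composition has no trailing zero parts. -/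
def NoTrailingZero (c : List ℕ) : Prop := ∀ h : c ≠ [], c.getLast h ≠ 0

/-- The set `BCM_ℓ(ν, μ)` of flagged `ℓ × ℓ` block composition matrices with row sum `ν`
and column sum `μ`: the entry at `(p,q,i,j)` is a composition (no trailing zeros) with at
most `min(p,q)` parts (`= min p q + 1` in 0-indexed form). -/
def BCM (ℓ : ℕ) (ν μ : Fin ℓ → List ℕ) : Set (Fin ℓ → Fin ℓ → ℕ → ℕ → List ℕ) :=
  {B | (∀ p q, {x : ℕ × ℕ | B p q x.1 x.2 ≠ []}.Finite) ∧
       (∀ p q i j, NoTrailingZero (B p q i j)) ∧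
       (∀ p q i j, (B p q i j).length ≤ min (p : ℕ) (q : ℕ) + 1) ∧
       (∀ s t, (∑ q, ∑ᶠ j, (B s q t j).sum) = (ν s).getD t 0) ∧
       (∀ s t, (∑ p, ∑ᶠ i, (B p s i t).sum) = (μ s).getD t 0)}

/-- The set `BW_ℓ(ν, μ)` of `(ν,μ)`-flagged biwords.  A biword over `S` is determined by
the multiset of its biletters (columns), so we encode it as a multiset of pairs
(top letter, bottom letter).  A letter `a_b` may appear in the `i`-th biword only if
`b ≥ i`; the top rows together form `U_ν` and the bottom rows form `U_μ`. -/
def BW (ℓ : ℕ) (ν μ : Fin ℓ → List ℕ) : Set (Fin ℓ → Multiset (Letter × Letter)) :=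
  {w | (∀ i : Fin ℓ, ∀ x ∈ w i, (i : ℕ) ≤ (ofLex x.1).1 ∧ (i : ℕ) ≤ (ofLex x.2).1) ∧
       (∑ i, (w i).map Prod.fst) = alphabetMultiset ℓ ν ∧
       (∑ i, (w i).map Prod.snd) = alphabetMultiset ℓ μ}

/-- The content multiset of a composition over the alphabet `ℕ` (0-indexed letters). -/
def natContent (c : List ℕ) : Multiset ℕ := contentMultiset c id

/-- Classical semistandard Young tableaux of shape `lam` and content `μ`,
with entries in `ℕ` (0-indexed letters). -/
def SSTclassical (lam μ : List ℕ) : Set (ℕ → ℕ → ℕ) :=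
  {T | IsSSYT lam 0 T ∧ entries lam T = natContent μ}

/-- Extend an `m × m` block ℕ-matrix to an `(m+1) × (m+1)` one by zero blocks. -/
def extendBlock (m : ℕ) (A : Fin m → Fin m → ((ℕ × ℕ) →₀ ℕ)) :
    Fin (m + 1) → Fin (m + 1) → ((ℕ × ℕ) →₀ ℕ) :=
  fun p q => if h : (p : ℕ) < m ∧ (q : ℕ) < m then A ⟨(p : ℕ), h.1⟩ ⟨(q : ℕ), h.2⟩ else 0

/-- Extend an `m × m` family of partitions by empty partitions. -/
def extendPart (m : ℕ) (P : Fin m → Fin m → ℕ → ℕ → List ℕ) :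
    Fin (m + 1) → Fin (m + 1) → ℕ → ℕ → List ℕ :=
  fun p q =>
    if h : (p : ℕ) < m ∧ (q : ℕ) < m then P ⟨(p : ℕ), h.1⟩ ⟨(q : ℕ), h.2⟩
    else fun _ _ => []

/-- Extend an `(m)`-multitableau by the empty tableau. -/
def extendTab (m : ℕ) (T : Fin m → ℕ → ℕ → Letter) : Fin (m + 1) → ℕ → ℕ → Letter :=
  fun i => if h : (i : ℕ) < m then T ⟨(i : ℕ), h⟩ else fun _ _ => toLex (0, 0)

/-- Extend an `m`-tuple of biwords by the empty biword. -/
def extendBW (m : ℕ) (w : Fin m → Multiset (Letter × Letter)) :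
    Fin (m + 1) → Multiset (Letter × Letter) :=
  fun i => if h : (i : ℕ) < m then w ⟨(i : ℕ), h⟩ else 0

/-! The entry `b` of a block composition matrix is recovered from its size `a = |b|` and its
tail sums `η_t = b_{t+1} + b_{t+2} + ⋯`. Since `b` ends in a positive part, these form a
partition with parts at most `a` and one part fewer than `b`; conversely, `b` is the sequence
of successive differences of `a ≥ η_0 ≥ η_1 ≥ ⋯ ≥ 0`. The row and column sums only see the
sizes `a`, so this entrywise bijection assembles into the bijection of block matrices. -/

/-- For `a = 0` and `η = []` this is the empty composition, not `[0]`. -/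
def ofTailSums : ℕ → List ℕ → List ℕ
  | a, [] => if a = 0 then [] else [a]
  | a, x :: xs => (a - x) :: ofTailSums x xs

def tailSums (b : List ℕ) : List ℕ :=
  (List.range (b.length - 1)).map fun t => (b.drop (t + 1)).sum

lemma sum_ofTailSums {η : List ℕ} (hη : η.Pairwise (· ≥ ·)) {a : ℕ} (ha : ∀ x ∈ η, x ≤ a) :
    (ofTailSums a η).sum = a := by
  induction η generalizing a with
  | nil => by_cases h : a = 0 <;> simp [ofTailSums, h]
  | cons x xs ih =>
    rw [List.pairwise_cons] at hη
    have hx : x ≤ a := ha x List.mem_cons_self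
    simp only [ofTailSums, List.sum_cons, ih hη.2 hη.1]
    omega

lemma sum_drop_succ_ofTailSums {η : List ℕ} (hη : η.Pairwise (· ≥ ·)) (a t : ℕ) :
    ((ofTailSums a η).drop (t + 1)).sum = η.getD t 0 := by
  induction η generalizing a t with
  | nil => by_cases h : a = 0 <;> simp [ofTailSums, h]
  | cons x xs ih =>
    rw [List.pairwise_cons] at hη
    cases t with
    | zero => simp [ofTailSums, sum_ofTailSums hη.2 hη.1]
    | succ t => simpa [ofTailSums] using ih hη.2 x t

lemma length_ofTailSums_le (a : ℕ) (η : List ℕ) : (ofTailSums a η).length ≤ η.length + 1 := by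
  induction η generalizing a with
  | nil => by_cases h : a = 0 <;> simp [ofTailSums, h]
  | cons x xs ih => simpa [ofTailSums] using ih x

lemma noTrailingZero_ofTailSums {η : List ℕ} (hη : ∀ x ∈ η, 0 < x) (a : ℕ) :
    NoTrailingZero (ofTailSums a η) := by
  induction η generalizing a with
  | nil => by_cases h : a = 0 <;> simp [NoTrailingZero, ofTailSums, h]
  | cons x xs ih =>
    intro hne
    have hx : x ≠ 0 := (hη x List.mem_cons_self).ne'
    have htail : ofTailSums x xs ≠ [] := by cases xs <;> simp [ofTailSums, hx]
    simp only [ofTailSums, List.getLast_cons htail]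
    exact ih (fun y hy => hη y (List.mem_cons_of_mem _ hy)) x htail

lemma antitone_sum_drop (b : List ℕ) : Antitone fun t => (b.drop t).sum := by
  intro s t hst
  simp only
  rw [show t = s + (t - s) by omega, ← List.drop_drop]
  exact (List.drop_sublist _ _).sum_le_sum fun _ _ => Nat.zero_le _

lemma NoTrailingZero.drop {b : List ℕ} (hb : NoTrailingZero b) (k : ℕ) :
    NoTrailingZero (b.drop k) := fun hne => by
  rw [List.getLast_drop hne]
  exact hb _

lemma NoTrailingZero.sum_pos {b : List ℕ} (hb : NoTrailingZero b) (hne : b ≠ []) :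
    0 < b.sum :=
  Nat.pos_of_ne_zero fun h => hb hne (List.sum_eq_zero_iff.mp h _ (List.getLast_mem hne))

lemma NoTrailingZero.lt_length_iff {b : List ℕ} (hb : NoTrailingZero b) (t : ℕ) :
    t < b.length ↔ 0 < (b.drop t).sum := by
  refine ⟨fun ht => (hb.drop t).sum_pos (by simpa using ht), fun h => ?_⟩
  by_contra ht
  simp [List.drop_eq_nil_of_le (not_lt.mp ht)] at h

/-- Reading a composition off its suffix sums, part `t` being the drop in suffix sum at `t`. -/
lemma eq_of_sum_drop_eq {b c : List ℕ} (hb : NoTrailingZero b) (hc : NoTrailingZero c)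
    (h : ∀ t, (b.drop t).sum = (c.drop t).sum) : b = c := by
  refine List.ext_getElem? fun t => ?_
  have key : ∀ l : List ℕ, NoTrailingZero l → l[t]? =
      if 0 < (l.drop t).sum then some ((l.drop t).sum - (l.drop (t + 1)).sum) else none := by
    intro l hl
    by_cases ht : t < l.length
    · rw [List.getElem?_eq_getElem ht, if_pos ((hl.lt_length_iff t).mp ht),
        List.drop_eq_getElem_cons ht, List.sum_cons, Nat.add_sub_cancel]
    · rw [if_neg (mt (hl.lt_length_iff t).mpr ht), List.getElem?_eq_none (not_lt.mp ht)]
  rw [key b hb, key c hc, h, h]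

lemma eq_of_getD_eq {l m : List ℕ} (hl : ∀ x ∈ l, 0 < x) (hm : ∀ x ∈ m, 0 < x)
    (h : ∀ t, l.getD t 0 = m.getD t 0) : l = m := by
  refine List.ext_getElem? fun t => ?_
  have key : ∀ l : List ℕ, (∀ x ∈ l, 0 < x) →
      l[t]? = if 0 < l.getD t 0 then some (l.getD t 0) else none := by
    intro l hl
    by_cases ht : t < l.length
    · simp [List.getElem?_eq_getElem ht, hl _ (List.getElem_mem ht)]
    · simp [List.getElem?_eq_none (not_lt.mp ht)]
  rw [key l hl, key m hm, h]

lemma getD_tailSums (b : List ℕ) (t : ℕ) : (tailSums b).getD t 0 = (b.drop (t + 1)).sum := by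
  by_cases h : t < b.length - 1
  · simp [tailSums, List.getD_eq_getElem?_getD, h]
  · rw [List.getD_eq_default _ _ (by simpa [tailSums] using h),
      List.drop_eq_nil_of_le (by omega), List.sum_nil]

lemma length_tailSums (b : List ℕ) : (tailSums b).length = b.length - 1 := by
  simp [tailSums]

lemma pairwise_tailSums (b : List ℕ) : (tailSums b).Pairwise (· ≥ ·) :=
  List.pairwise_map.mpr <| List.pairwise_lt_range.imp fun h => antitone_sum_drop b (by omega)

lemma le_sum_of_mem_tailSums {b : List ℕ} : ∀ x ∈ tailSums b, x ≤ b.sum := by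
  simp only [tailSums, List.mem_map, forall_exists_index, and_imp]
  rintro _ t _ rfl
  exact antitone_sum_drop b (Nat.zero_le (t + 1))

lemma NoTrailingZero.pos_of_mem_tailSums {b : List ℕ} (hb : NoTrailingZero b) :
    ∀ x ∈ tailSums b, 0 < x := by
  simp only [tailSums, List.mem_map, List.mem_range, forall_exists_index, and_imp]
  rintro _ t ht rfl
  exact (hb.lt_length_iff _).mp (by omega)

lemma tailSums_ofTailSums {η : List ℕ} (hη : IsPartitionList η) (a : ℕ) :
    tailSums (ofTailSums a η) = η :=
  eq_of_getD_eq (noTrailingZero_ofTailSums hη.2 a).pos_of_mem_tailSums hη.2 fun t => by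
    rw [getD_tailSums, sum_drop_succ_ofTailSums hη.1]

lemma ofTailSums_sum_tailSums {b : List ℕ} (hb : NoTrailingZero b) :
    ofTailSums b.sum (tailSums b) = b := by
  refine eq_of_sum_drop_eq (noTrailingZero_ofTailSums hb.pos_of_mem_tailSums _) hb fun t => ?_
  cases t with
  | zero => simpa using sum_ofTailSums (pairwise_tailSums b) le_sum_of_mem_tailSums
  | succ t => rw [sum_drop_succ_ofTailSums (pairwise_tailSums b), getD_tailSums]

lemma sum_support_ite_eq_finsum (M : (ℕ × ℕ) →₀ ℕ) (P : ℕ × ℕ → Prop) [DecidablePred P] :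
    ∑ x ∈ M.support, (if P x then M x else 0) = ∑ᶠ (i) (j), if P (i, j) then M (i, j) else 0 := by
  rw [← finsum_curry (fun x => if P x then M x else 0) (M.hasFiniteSupport.subset fun x hx => ?_),
    finsum_eq_sum_of_support_subset _ fun x hx => ?_] <;>
  · contrapose! hx
    simp_all

lemma rowSum_eq_finsum (M : (ℕ × ℕ) →₀ ℕ) (t : ℕ) : rowSum M t = ∑ᶠ j, M (t, j) := by
  rw [rowSum, sum_support_ite_eq_finsum, finsum_eq_single _ t fun i hi => by simp [hi]]
  simp

lemma colSum_eq_finsum (M : (ℕ × ℕ) →₀ ℕ) (t : ℕ) : colSum M t = ∑ᶠ i, M (i, t) := by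
  rw [colSum, sum_support_ite_eq_finsum]
  exact finsum_congr fun i => (finsum_eq_single _ t fun j hj => if_neg hj).trans (if_pos rfl)

noncomputable section BlockMatrices

variable {ℓ : ℕ} {ν μ : Fin ℓ → List ℕ}

def toBCM (AP : (Fin ℓ → Fin ℓ → ((ℕ × ℕ) →₀ ℕ)) × (Fin ℓ → Fin ℓ → ℕ → ℕ → List ℕ)) :
    Fin ℓ → Fin ℓ → ℕ → ℕ → List ℕ :=
  fun p q i j => ofTailSums (AP.1 p q (i, j)) (AP.2 p q i j)

lemma sum_toBCM {AP} (h : AP ∈ ParMat ℓ ν μ) (p q : Fin ℓ) (i j : ℕ) :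
    (toBCM AP p q i j).sum = AP.1 p q (i, j) :=
  sum_ofTailSums (h.2.2.1 p q i j).1 (h.2.2.2.1 p q i j)

lemma toBCM_mem {AP} (h : AP ∈ ParMat ℓ ν μ) : toBCM AP ∈ BCM ℓ ν μ := by
  have hsum := sum_toBCM h
  obtain ⟨hrow, hcol, hpart, -, hlen⟩ := h
  have hntz p q i j : NoTrailingZero (toBCM AP p q i j) :=
    noTrailingZero_ofTailSums (hpart p q i j).2 _
  refine ⟨fun p q => (AP.1 p q).support.finite_toSet.subset fun x hx => ?_, hntz,
    fun p q i j => (length_ofTailSums_le _ _).trans (by simpa using hlen p q i j),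
    fun s t => ?_, fun s t => ?_⟩
  · rw [Finset.mem_coe, Finsupp.mem_support_iff, ← hsum]
    exact ((hntz p q x.1 x.2).sum_pos hx).ne'
  · simp only [hsum, ← rowSum_eq_finsum, hrow]
  · simp only [hsum, ← colSum_eq_finsum, hcol]

def entrySums (B : Fin ℓ → Fin ℓ → ℕ → ℕ → List ℕ)
    (hB : ∀ p q, {x : ℕ × ℕ | B p q x.1 x.2 ≠ []}.Finite) : Fin ℓ → Fin ℓ → ((ℕ × ℕ) →₀ ℕ) :=
  fun p q => Finsupp.ofSupportFinite (fun x => (B p q x.1 x.2).sum)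
    ((hB p q).subset fun x hx hnil => hx (by simp [hnil]))

lemma entrySums_apply (B : Fin ℓ → Fin ℓ → ℕ → ℕ → List ℕ)
    (hB : ∀ p q, {x : ℕ × ℕ | B p q x.1 x.2 ≠ []}.Finite) (p q : Fin ℓ) (x : ℕ × ℕ) :
    entrySums B hB p q x = (B p q x.1 x.2).sum :=
  rfl

def toParMat {B : Fin ℓ → Fin ℓ → ℕ → ℕ → List ℕ} (hB : B ∈ BCM ℓ ν μ) :
    (Fin ℓ → Fin ℓ → ((ℕ × ℕ) →₀ ℕ)) × (Fin ℓ → Fin ℓ → ℕ → ℕ → List ℕ) :=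
  (entrySums B hB.1, fun p q i j => tailSums (B p q i j))

lemma toParMat_mem {B} (hB : B ∈ BCM ℓ ν μ) : toParMat hB ∈ ParMat ℓ ν μ := by
  obtain ⟨-, hntz, hlen, hrow, hcol⟩ := hB
  refine ⟨fun s t => ?_, fun s t => ?_, fun p q i j => ⟨pairwise_tailSums _,
    (hntz p q i j).pos_of_mem_tailSums⟩, fun p q i j => le_sum_of_mem_tailSums,
    fun p q i j => ?_⟩
  · simp only [toParMat, rowSum_eq_finsum, entrySums_apply, hrow]
  · simp only [toParMat, colSum_eq_finsum, entrySums_apply, hcol]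
  · simp only [toParMat, length_tailSums]
    have := hlen p q i j
    omega

variable (ℓ ν μ) in
def parMatEquivBCM : ParMat ℓ ν μ ≃ BCM ℓ ν μ where
  toFun AP := ⟨toBCM AP.1, toBCM_mem AP.2⟩
  invFun B := ⟨toParMat B.2, toParMat_mem B.2⟩
  left_inv := by
    rintro ⟨AP, h⟩
    refine Subtype.ext (Prod.ext (funext₂ fun p q => Finsupp.ext fun x => ?_)
      (funext₂ fun p q => funext₂ fun i j => tailSums_ofTailSums (h.2.2.1 p q i j) _))
    exact sum_toBCM h p q x.1 x.2
  right_inv := by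
    rintro ⟨B, h⟩
    exact Subtype.ext (funext₂ fun p q => funext₂ fun i j =>
      ofTailSums_sum_tailSums (h.2.1 p q i j))

end BlockMatrices

theorem parmat_equiv_bcm_general (ℓ : ℕ) (ν μ : Fin ℓ → List ℕ) :
    ∃ e : ↥(ParMat ℓ ν μ) ≃ ↥(BCM ℓ ν μ),
      ∀ AP : ↥(ParMat ℓ ν μ), ∀ (p q : Fin ℓ) (i j : ℕ),
        ((e AP).1 p q i j).sum = AP.1.1 p q (i, j) ∧
        ∀ t : ℕ, (AP.1.2 p q i j).getD t 0 = (((e AP).1 p q i j).drop (t + 1)).sum :=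
  ⟨parMatEquivBCM ℓ ν μ, fun AP p q i j => ⟨sum_toBCM AP.2 p q i j,
    fun t => (sum_drop_succ_ofTailSums (AP.2.2.2.1 p q i j).1 _ t).symm⟩⟩

/-- `ParMat♭_{ν,μ}` is in bijection with `BCM_ℓ(ν,μ)`, where `(A,P)`
corresponds to `B` with `|b^{(pq)}_{ij}| = a^{(pq)}_{ij}`, and each part of the partition
`η^{(pq)}_{ij}` is the sum of the later parts of the composition `b^{(pq)}_{ij}`
(the `t`-th part of `η` is the sum of the parts of `b` in positions `> t`). -/
theorem parmat_equiv_bcm (ℓ n : ℕ) (hℓ : 1 ≤ ℓ) (ν μ : Fin ℓ → List ℕ)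
    (hν : IsMultiComp ℓ n ν) (hμ : IsMultiComp ℓ n μ) :
    ∃ e : ↥(ParMat ℓ ν μ) ≃ ↥(BCM ℓ ν μ),
      ∀ AP : ↥(ParMat ℓ ν μ), ∀ (p q : Fin ℓ) (i j : ℕ),
        ((e AP).1 p q i j).sum = AP.1.1 p q (i, j) ∧
        ∀ t : ℕ, (AP.1.2 p q i j).getD t 0 = (((e AP).1 p q i j).drop (t + 1)).sum :=
  parmat_equiv_bcm_general ℓ ν μ
end

section
/- Fix ℓ ≥ 1 and ℓ-multicompositions ν and μ of n. There is a bijection between the set BCM_ℓ(ν,μ) of flagged ℓ×ℓ block composition matrices with row sum ν and column sum μ and the set BW_ℓ(ν,μ) of (ν,μ)-flagged biwords, under which B corresponds to the tuple w = (w^{(1)},…,w^{(ℓ)}) in which, for all p,q,i,j and all 1 ≤ t ≤ ℓ, the biletter with top letter i_p and bottom letter j_q occurs in w^{(t)} with multiplicity equal to the t-th part of the composition b^{(pq)}_{ij} (interpreted as 0 if t exceeds its length). -/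
/-! The `t`-th part of `b^{(pq)}_{ij}` and the multiplicity of the biletter `(i_p, j_q)` in
`w^{(t)}` are the same datum, so both sides are finitely supported families of multiplicities
indexed by `(t, p, q, i, j)`. The nonzero parts of a composition of length at most `min(p,q)`
sit at `t ≤ min(p,q)`, which is the flag condition on `w^{(t)}`. Summed over `t`, the row sum
`Σ_q Σ_j |b^{(sq)}_{ij}|` is the number of biletters with top letter `i_s`, so the row sum
condition says that the top rows form `U_ν`; exchanging the two rows of every biword transposes
`B` and turns the column sum condition into a row sum condition. -/

namespace List

theorem getD_rdropWhile_eq_zero (l : List ℕ) (t : ℕ) :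
    (l.rdropWhile (· == 0)).getD t 0 = l.getD t 0 := by
  conv_rhs => rw [← rdropWhile_append_rtakeWhile (p := (· == 0)) (l := l)]
  rcases lt_or_ge t (l.rdropWhile (· == 0)).length with ht | ht
  · rw [getD_append _ _ _ _ ht]
  · rw [getD_append_right _ _ _ _ ht, getD_eq_default _ _ ht, getD_eq_getElem?_getD]
    cases h : (l.rtakeWhile (· == 0))[t - (l.rdropWhile (· == 0)).length]? with
    | none => rfl
    | some x =>
      have hx : (x == 0) = true := mem_rtakeWhile_imp (p := (· == 0)) (mem_of_getElem? h)
      simp [beq_iff_eq.mp hx]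

theorem sum_rdropWhile_eq_zero (l : List ℕ) : (l.rdropWhile (· == 0)).sum = l.sum := by
  conv_rhs => rw [← rdropWhile_append_rtakeWhile (p := (· == 0)) (l := l)]
  have hzero : (l.rtakeWhile (· == 0)).sum = 0 :=
    sum_eq_zero fun x hx => by simpa using mem_rtakeWhile_imp hx
  rw [sum_append, hzero, add_zero]

end List

theorem noTrailingZero_rdropWhile (l : List ℕ) : NoTrailingZero (l.rdropWhile (· == 0)) :=
  fun h => by simpa using List.rdropWhile_last_not (· == 0) l h

theorem NoTrailingZero.getD_length_sub_one_ne_zero {l : List ℕ} (hl : NoTrailingZero l)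
    (hne : l ≠ []) : l.getD (l.length - 1) 0 ≠ 0 := by
  rw [List.getD_eq_getElem _ _ (by simpa [List.length_pos_iff] using hne),
    ← List.getLast_eq_getElem hne]
  exact hl hne

theorem NoTrailingZero.length_le {l l' : List ℕ} (hl : NoTrailingZero l)
    (h : ∀ t, l.getD t 0 = l'.getD t 0) : l.length ≤ l'.length := by
  rcases eq_or_ne l [] with rfl | hne
  · simp
  have hlast := hl.getD_length_sub_one_ne_zero hne
  rw [h] at hlast
  have := List.length_pos_iff.mpr hne
  by_contra! hlt
  exact hlast (List.getD_eq_default _ _ (by omega))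

theorem NoTrailingZero.ext {l l' : List ℕ} (hl : NoTrailingZero l) (hl' : NoTrailingZero l')
    (h : ∀ t, l.getD t 0 = l'.getD t 0) : l = l' :=
  List.ext_getElem (le_antisymm (hl.length_le h) (hl'.length_le fun t => (h t).symm))
    fun t h₁ h₂ => by rw [← List.getD_eq_getElem _ 0 h₁, ← List.getD_eq_getElem _ 0 h₂, h]

open Multiset Function

theorem Multiset.count_map_fst_eq_finsum {α β : Type*} [DecidableEq α] [DecidableEq β]
    (m : Multiset (α × β)) (a : α) : count a (m.map Prod.fst) = ∑ᶠ b, count (a, b) m := by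
  induction m using Multiset.induction_on with
  | empty => simp
  | cons x m ih =>
    have hfin : (support fun b => count (a, b) m).Finite :=
      (m.toFinset.image Prod.snd).finite_toSet.subset fun b hb => by
        simpa using ⟨a, count_ne_zero.mp hb⟩
    have hsingle : (support fun b => if (a, b) = x then 1 else 0).Finite :=
      (Set.finite_singleton x.2).subset fun b hb => by
        simp only [mem_support, ne_eq, ite_eq_right_iff, Classical.not_imp] at hb
        simp [← hb.1]
    rw [map_cons, count_cons, ih]
    simp only [count_cons]
    rw [finsum_add_distrib hfin hsingle, finsum_eq_single _ x.2 fun b hb => if_neg fun h => hb (by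
      rw [← h])]
    simp [Prod.ext_iff]

theorem finsum_eq_finsum_comp_of_support_subset_range {α β M : Type*} [AddCommMonoid M]
    {f : β → M} {g : α → β} (hg : Injective g) (h : support f ⊆ Set.range g) :
    ∑ᶠ b, f b = ∑ᶠ a, f (g a) := by
  rw [← finsum_mem_range hg, ← finsum_mem_univ]
  exact finsum_mem_inter_support_eq _ _ _ (by rw [Set.univ_inter, Set.inter_eq_right.mpr h])

theorem count_contentMultiset {α : Type*} [DecidableEq α] (c : List ℕ) {f : ℕ → α}
    (hf : Injective f) (a : ℕ) : count (f a) (contentMultiset c f) = c.getD a 0 := by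
  rw [contentMultiset, count_bind]
  change ∑ b ∈ Finset.range c.length, count (f a) (replicate (c.getD b 0) (f b)) = _
  simp only [count_replicate, hf.eq_iff, Finset.sum_ite_eq', Finset.mem_range]
  split_ifs with ha
  · rfl
  · exact (List.getD_eq_default _ _ (not_lt.mp ha)).symm

theorem mem_range_of_mem_contentMultiset {α : Type*} {c : List ℕ} {f : ℕ → α} {y : α}
    (h : y ∈ contentMultiset c f) : y ∈ Set.range f := by
  obtain ⟨a, -, ha⟩ := mem_bind.mp h
  exact ⟨a, (eq_of_mem_replicate ha).symm⟩

section Letters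

variable (ℓ : ℕ)

def letter : Fin ℓ × ℕ ↪ Letter where
  toFun x := toLex ((x.1 : ℕ), x.2)
  inj' x y h := by simpa [Prod.ext_iff, Fin.ext_iff] using h

def biletter : (Fin ℓ × ℕ) × (Fin ℓ × ℕ) ↪ Letter × Letter :=
  (letter ℓ).prodMap (letter ℓ)

variable {ℓ}

@[simp]
theorem letter_apply (x : Fin ℓ × ℕ) : letter ℓ x = toLex ((x.1 : ℕ), x.2) := rfl

@[simp]
theorem biletter_apply (x : (Fin ℓ × ℕ) × (Fin ℓ × ℕ)) :
    biletter ℓ x = (letter ℓ x.1, letter ℓ x.2) := rfl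

theorem count_letter_alphabetMultiset (ν : Fin ℓ → List ℕ) (x : Fin ℓ × ℕ) :
    count (letter ℓ x) (alphabetMultiset ℓ ν) = (ν x.1).getD x.2 0 := by
  rw [alphabetMultiset, count_sum', Finset.sum_eq_single x.1]
  · exact count_contentMultiset _ (fun a b h => congrArg (fun y => (ofLex y).2) h) _
  · intro b _ hb
    refine count_eq_zero.mpr fun h => hb ?_
    obtain ⟨a, ha⟩ := mem_range_of_mem_contentMultiset h
    simpa [Fin.ext_iff] using congrArg (fun y => (ofLex y).1) ha
  · simp

theorem mem_range_of_mem_alphabetMultiset {ν : Fin ℓ → List ℕ} {y : Letter}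
    (h : y ∈ alphabetMultiset ℓ ν) : y ∈ Set.range (letter ℓ) := by
  obtain ⟨b, -, hb⟩ := mem_sum.mp h
  obtain ⟨a, rfl⟩ := mem_range_of_mem_contentMultiset hb
  exact ⟨(b, a), rfl⟩

end Letters

section Biword

variable {ℓ : ℕ} {B : Fin ℓ → Fin ℓ → ℕ → ℕ → List ℕ}

theorem finite_setOf_entry_ne_nil (hB : ∀ p q, {x : ℕ × ℕ | B p q x.1 x.2 ≠ []}.Finite) :
    {x : (Fin ℓ × ℕ) × (Fin ℓ × ℕ) | B x.1.1 x.2.1 x.1.2 x.2.2 ≠ []}.Finite := by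
  refine (Set.finite_iUnion fun p => Set.finite_iUnion fun q =>
    (hB p q).image fun ij => ((p, ij.1), (q, ij.2))).subset ?_
  rintro ⟨⟨p, i⟩, q, j⟩ h
  exact Set.mem_iUnion₂.mpr ⟨p, q, (i, j), h, rfl⟩

variable (hB : ∀ p q, {x : ℕ × ℕ | B p q x.1 x.2 ≠ []}.Finite)

noncomputable def toBiword (t : Fin ℓ) : Multiset (Letter × Letter) :=
  Finsupp.toMultiset <| Finsupp.embDomain (biletter ℓ) <|
    Finsupp.ofSupportFinite (fun x => (B x.1.1 x.2.1 x.1.2 x.2.2).getD t 0)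
      ((finite_setOf_entry_ne_nil hB).subset fun x hx h => hx (by simp [h]))

theorem count_biletter_toBiword (t : Fin ℓ) (x : (Fin ℓ × ℕ) × (Fin ℓ × ℕ)) :
    count (biletter ℓ x) (toBiword hB t) = (B x.1.1 x.2.1 x.1.2 x.2.2).getD t 0 := by
  rw [toBiword, Finsupp.count_toMultiset, Finsupp.embDomain_apply_self,
    Finsupp.ofSupportFinite_coe]

theorem count_toBiword_of_notMem_range (t : Fin ℓ) {y : Letter × Letter}
    (hy : y ∉ Set.range (biletter ℓ)) : count y (toBiword hB t) = 0 := by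
  rw [toBiword, Finsupp.count_toMultiset, Finsupp.embDomain_of_notMem_range _ _ _ hy]

theorem exists_biletter_of_mem_toBiword {t : Fin ℓ} {y : Letter × Letter}
    (hy : y ∈ toBiword hB t) :
    ∃ x, biletter ℓ x = y ∧ (B x.1.1 x.2.1 x.1.2 x.2.2).getD t 0 ≠ 0 := by
  by_cases hr : y ∈ Set.range (biletter ℓ)
  · obtain ⟨x, rfl⟩ := hr
    exact ⟨x, rfl, count_biletter_toBiword hB t x ▸ count_ne_zero.mpr hy⟩
  · exact absurd (count_toBiword_of_notMem_range hB t hr) (count_ne_zero.mpr hy)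

theorem mem_range_biletter_of_mem_toBiword {t : Fin ℓ} {y : Letter × Letter}
    (hy : y ∈ toBiword hB t) : y ∈ Set.range (biletter ℓ) :=
  let ⟨x, hx, _⟩ := exists_biletter_of_mem_toBiword hB hy
  ⟨x, hx⟩

end Biword

section BlockComp

variable {ℓ : ℕ} (w : Fin ℓ → Multiset (Letter × Letter))

def toBlockComp (p q : Fin ℓ) (i j : ℕ) : List ℕ :=
  (List.ofFn fun t => count (biletter ℓ ((p, i), (q, j))) (w t)).rdropWhile (· == 0)

theorem getD_toBlockComp (p q : Fin ℓ) (i j : ℕ) (t : Fin ℓ) :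
    (toBlockComp w p q i j).getD t 0 = count (biletter ℓ ((p, i), (q, j))) (w t) := by
  rw [toBlockComp, List.getD_rdropWhile_eq_zero, List.getD_eq_getElem _ _ (by simp),
    List.getElem_ofFn]

theorem length_toBlockComp_le (p q : Fin ℓ) (i j : ℕ) : (toBlockComp w p q i j).length ≤ ℓ :=
  (List.rdropWhile_prefix _ _).length_le.trans List.length_ofFn.le

theorem sum_toBlockComp (p q : Fin ℓ) (i j : ℕ) :
    (toBlockComp w p q i j).sum = ∑ t, count (biletter ℓ ((p, i), (q, j))) (w t) := by
  rw [toBlockComp, List.sum_rdropWhile_eq_zero, List.sum_ofFn]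

theorem noTrailingZero_toBlockComp (p q : Fin ℓ) (i j : ℕ) :
    NoTrailingZero (toBlockComp w p q i j) :=
  noTrailingZero_rdropWhile _

theorem finite_setOf_toBlockComp_ne_nil (p q : Fin ℓ) :
    {x : ℕ × ℕ | toBlockComp w p q x.1 x.2 ≠ []}.Finite := by
  have hinj : Injective fun x : ℕ × ℕ => biletter ℓ ((p, x.1), (q, x.2)) := fun x x' h => by
    have := (biletter ℓ).injective h
    simp only [Prod.mk.injEq] at this
    exact Prod.ext this.1.2 this.2.2
  refine (Set.finite_iUnion fun t => (w t).toFinset.finite_toSet.preimage hinj.injOn).subset ?_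
  intro x hx
  contrapose! hx
  simp only [Set.mem_iUnion, Set.mem_preimage, Finset.mem_coe, mem_toFinset, not_exists] at hx
  simp only [Set.mem_ofPred_eq, not_not, toBlockComp, List.rdropWhile_eq_nil_iff, List.mem_ofFn]
  rintro _ ⟨t, rfl⟩
  simpa using count_eq_zero.mpr (hx t)

theorem toBlockComp_map_swap (p q : Fin ℓ) (i j : ℕ) :
    toBlockComp (fun t => (w t).map Prod.swap) p q i j = toBlockComp w q p j i := by
  simp only [toBlockComp, biletter_apply]
  congr 2
  funext t
  simpa using count_map_eq_count' Prod.swap (w t) Prod.swap_injective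
    (letter ℓ (q, j), letter ℓ (p, i))

end BlockComp

theorem Multiset.eq_iff_forall_count_eq_of_subset_range {α β : Type*} [DecidableEq β]
    {g : α → β} {M N : Multiset β} (hM : ∀ y ∈ M, y ∈ Set.range g)
    (hN : ∀ y ∈ N, y ∈ Set.range g) : M = N ↔ ∀ x, count (g x) M = count (g x) N := by
  refine ⟨fun h x => h ▸ rfl, fun h => ext' fun y => ?_⟩
  by_cases hy : y ∈ Set.range g
  · obtain ⟨x, rfl⟩ := hy
    exact h x
  · rw [count_eq_zero.mpr fun h => hy (hM y h), count_eq_zero.mpr fun h => hy (hN y h)]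

section RowSums

variable {ℓ : ℕ} {w : Fin ℓ → Multiset (Letter × Letter)}

theorem count_letter_sum_map_fst (hw : ∀ t, ∀ y ∈ w t, y ∈ Set.range (biletter ℓ))
    (s : Fin ℓ) (i : ℕ) :
    count (letter ℓ (s, i)) (∑ t, (w t).map Prod.fst) =
      ∑ q, ∑ᶠ j, (toBlockComp w s q i j).sum := by
  set W := ∑ t, w t
  set a := letter ℓ (s, i)
  have hW : ∀ y ∈ W, y ∈ Set.range (biletter ℓ) := fun y hy =>
    let ⟨t, _, ht⟩ := mem_sum.mp hy
    hw t y ht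
  have hsupp : support (fun y => count (a, y) W) ⊆ Set.range (letter ℓ) := fun y hy =>
    let ⟨x, hx⟩ := hW _ (count_ne_zero.mp hy)
    ⟨x.2, congrArg Prod.snd hx⟩
  have hfin : HasFiniteSupport fun x => count (a, letter ℓ x) W :=
    ((W.toFinset.image Prod.snd).finite_toSet.preimage (letter ℓ).injective.injOn).subset
      fun x hx => Finset.mem_coe.mpr <|
        Finset.mem_image.mpr ⟨_, mem_toFinset.mpr (count_ne_zero.mp hx), rfl⟩
  calc count a (∑ t, (w t).map Prod.fst)
      = ∑ᶠ y, count (a, y) W := by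
        rw [← count_map_fst_eq_finsum, ← mapAddMonoidHom_apply, map_sum]
        rfl
    _ = ∑ᶠ x, count (a, letter ℓ x) W :=
        finsum_eq_finsum_comp_of_support_subset_range (letter ℓ).injective hsupp
    _ = ∑ q, ∑ᶠ j, count (a, letter ℓ (q, j)) W := by
        rw [finsum_curry _ hfin, finsum_eq_sum_of_fintype]
    _ = ∑ q, ∑ᶠ j, (toBlockComp w s q i j).sum := by
        simp only [W, sum_toBlockComp, count_sum', biletter_apply, a]

theorem sum_map_fst_eq_alphabetMultiset_iff
    (hw : ∀ t, ∀ y ∈ w t, y ∈ Set.range (biletter ℓ)) (ν : Fin ℓ → List ℕ) :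
    ∑ t, (w t).map Prod.fst = alphabetMultiset ℓ ν ↔
      ∀ s i, ∑ q, ∑ᶠ j, (toBlockComp w s q i j).sum = (ν s).getD i 0 := by
  have hfst : ∀ y ∈ ∑ t, (w t).map Prod.fst, y ∈ Set.range (letter ℓ) := fun y hy => by
    obtain ⟨t, -, ht⟩ := mem_sum.mp hy
    obtain ⟨z, hz, rfl⟩ := mem_map.mp ht
    obtain ⟨x, rfl⟩ := hw t z hz
    exact ⟨x.1, rfl⟩
  rw [eq_iff_forall_count_eq_of_subset_range hfst fun y => mem_range_of_mem_alphabetMultiset]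
  simp only [Prod.forall, count_letter_sum_map_fst hw, count_letter_alphabetMultiset]

theorem sum_map_snd_eq_alphabetMultiset_iff
    (hw : ∀ t, ∀ y ∈ w t, y ∈ Set.range (biletter ℓ)) (μ : Fin ℓ → List ℕ) :
    ∑ t, (w t).map Prod.snd = alphabetMultiset ℓ μ ↔
      ∀ s j, ∑ p, ∑ᶠ i, (toBlockComp w p s i j).sum = (μ s).getD j 0 := by
  have hswap : ∀ t, ∀ y ∈ (w t).map Prod.swap, y ∈ Set.range (biletter ℓ) := fun t y hy => by
    obtain ⟨z, hz, rfl⟩ := mem_map.mp hy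
    obtain ⟨x, rfl⟩ := hw t z hz
    exact ⟨x.swap, rfl⟩
  simpa only [map_map, Function.comp_def, Prod.fst_swap, toBlockComp_map_swap] using
    sum_map_fst_eq_alphabetMultiset_iff hswap μ

end RowSums

section Inverse

variable {ℓ : ℕ}

theorem toBlockComp_toBiword {B : Fin ℓ → Fin ℓ → ℕ → ℕ → List ℕ}
    (hB : ∀ p q, {x : ℕ × ℕ | B p q x.1 x.2 ≠ []}.Finite)
    (hB₀ : ∀ p q i j, NoTrailingZero (B p q i j)) (hBℓ : ∀ p q i j, (B p q i j).length ≤ ℓ) :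
    toBlockComp (toBiword hB) = B := by
  funext p q i j
  refine (noTrailingZero_toBlockComp _ p q i j).ext (hB₀ p q i j) fun t => ?_
  by_cases ht : t < ℓ
  · exact (getD_toBlockComp _ p q i j ⟨t, ht⟩).trans
      (count_biletter_toBiword hB _ ((p, i), (q, j)))
  · rw [List.getD_eq_default _ _ ((length_toBlockComp_le _ p q i j).trans (not_lt.mp ht)),
      List.getD_eq_default _ _ ((hBℓ p q i j).trans (not_lt.mp ht))]

theorem toBiword_toBlockComp {w : Fin ℓ → Multiset (Letter × Letter)}
    (hw : ∀ t, ∀ y ∈ w t, y ∈ Set.range (biletter ℓ)) :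
    toBiword (finite_setOf_toBlockComp_ne_nil w) = w := by
  funext t
  ext y
  by_cases hy : y ∈ Set.range (biletter ℓ)
  · obtain ⟨x, rfl⟩ := hy
    rw [count_biletter_toBiword, getD_toBlockComp]
  · rw [count_toBiword_of_notMem_range _ _ hy, eq_comm, count_eq_zero]
    exact fun h => hy (hw t y h)

end Inverse

section Membership

variable {ℓ : ℕ} {ν μ : Fin ℓ → List ℕ}

theorem mem_range_biletter_of_mem_BW {w : Fin ℓ → Multiset (Letter × Letter)}
    (hw : w ∈ BW ℓ ν μ) {t : Fin ℓ} {y : Letter × Letter} (hy : y ∈ w t) :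
    y ∈ Set.range (biletter ℓ) := by
  have h₁ : y.1 ∈ alphabetMultiset ℓ ν :=
    hw.2.1 ▸ mem_sum.mpr ⟨t, Finset.mem_univ _, mem_map_of_mem _ hy⟩
  have h₂ : y.2 ∈ alphabetMultiset ℓ μ :=
    hw.2.2 ▸ mem_sum.mpr ⟨t, Finset.mem_univ _, mem_map_of_mem _ hy⟩
  obtain ⟨a, ha⟩ := mem_range_of_mem_alphabetMultiset h₁
  obtain ⟨b, hb⟩ := mem_range_of_mem_alphabetMultiset h₂
  exact ⟨(a, b), Prod.ext ha hb⟩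

theorem toBlockComp_toBiword_of_mem_BCM {B : Fin ℓ → Fin ℓ → ℕ → ℕ → List ℕ}
    (hB : B ∈ BCM ℓ ν μ) : toBlockComp (toBiword hB.1) = B :=
  toBlockComp_toBiword hB.1 hB.2.1 fun p q i j => by
    have := hB.2.2.1 p q i j
    omega

theorem le_of_mem_toBiword {B : Fin ℓ → Fin ℓ → ℕ → ℕ → List ℕ}
    (hB : ∀ p q, {x : ℕ × ℕ | B p q x.1 x.2 ≠ []}.Finite)
    (hlen : ∀ p q i j, (B p q i j).length ≤ min (p : ℕ) (q : ℕ) + 1) {t : Fin ℓ}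
    {y : Letter × Letter} (hy : y ∈ toBiword hB t) :
    (t : ℕ) ≤ (ofLex y.1).1 ∧ (t : ℕ) ≤ (ofLex y.2).1 := by
  obtain ⟨⟨⟨p, i⟩, q, j⟩, rfl, hne⟩ := exists_biletter_of_mem_toBiword hB hy
  have hlt : (t : ℕ) < (B p q i j).length := by
    by_contra! h
    exact hne (List.getD_eq_default _ _ h)
  have := hlen p q i j
  exact ⟨show (t : ℕ) ≤ p by omega, show (t : ℕ) ≤ q by omega⟩

theorem toBiword_mem_BW {B : Fin ℓ → Fin ℓ → ℕ → ℕ → List ℕ} (hB : B ∈ BCM ℓ ν μ) :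
    toBiword hB.1 ∈ BW ℓ ν μ := by
  have hw : ∀ t, ∀ y ∈ toBiword hB.1 t, y ∈ Set.range (biletter ℓ) := fun _ _ =>
    mem_range_biletter_of_mem_toBiword hB.1
  have hinv := toBlockComp_toBiword_of_mem_BCM hB
  refine ⟨fun t y => le_of_mem_toBiword hB.1 hB.2.2.1, ?_, ?_⟩
  · rw [sum_map_fst_eq_alphabetMultiset_iff hw ν, hinv]
    exact hB.2.2.2.1
  · rw [sum_map_snd_eq_alphabetMultiset_iff hw μ, hinv]
    exact hB.2.2.2.2

theorem length_toBlockComp_le_min {w : Fin ℓ → Multiset (Letter × Letter)} (hw : w ∈ BW ℓ ν μ)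
    (p q : Fin ℓ) (i j : ℕ) : (toBlockComp w p q i j).length ≤ min (p : ℕ) (q : ℕ) + 1 := by
  have hlen := length_toBlockComp_le w p q i j
  rcases eq_or_ne (toBlockComp w p q i j) [] with hL | hL
  · simp [hL]
  have hpos := List.length_pos_iff.mpr hL
  have hlast := (noTrailingZero_toBlockComp w p q i j).getD_length_sub_one_ne_zero hL
  generalize (toBlockComp w p q i j).length = n at hlen hpos hlast ⊢
  rw [show n - 1 = ((⟨n - 1, by omega⟩ : Fin ℓ) : ℕ) from rfl, getD_toBlockComp] at hlast
  have hflag := hw.1 _ _ (count_ne_zero.mp hlast)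
  have hp : n - 1 ≤ p := hflag.1
  have hq : n - 1 ≤ q := hflag.2
  omega

theorem toBlockComp_mem_BCM {w : Fin ℓ → Multiset (Letter × Letter)} (hw : w ∈ BW ℓ ν μ) :
    toBlockComp w ∈ BCM ℓ ν μ :=
  ⟨finite_setOf_toBlockComp_ne_nil w, noTrailingZero_toBlockComp w,
    length_toBlockComp_le_min hw,
    (sum_map_fst_eq_alphabetMultiset_iff (fun _ _ => mem_range_biletter_of_mem_BW hw) ν).mp hw.2.1,
    (sum_map_snd_eq_alphabetMultiset_iff (fun _ _ => mem_range_biletter_of_mem_BW hw) μ).mp hw.2.2⟩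

end Membership

theorem bcm_equiv_bw_general (ℓ : ℕ) (ν μ : Fin ℓ → List ℕ) :
    ∃ e : ↥(BCM ℓ ν μ) ≃ ↥(BW ℓ ν μ),
      ∀ B : ↥(BCM ℓ ν μ), ∀ (t p q : Fin ℓ) (i j : ℕ),
        ((e B).1 t).count (toLex ((p : ℕ), i), toLex ((q : ℕ), j)) =
          (B.1 p q i j).getD (t : ℕ) 0 := by
  refine ⟨{ toFun := fun B => ⟨toBiword B.2.1, toBiword_mem_BW B.2⟩
            invFun := fun w => ⟨toBlockComp w.1, toBlockComp_mem_BCM w.2⟩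
            left_inv := fun B => Subtype.ext ?_
            right_inv := fun w => Subtype.ext ?_ }, ?_⟩
  · exact toBlockComp_toBiword_of_mem_BCM B.2
  · exact toBiword_toBlockComp fun _ _ => mem_range_biletter_of_mem_BW w.2
  · intro B t p q i j
    exact count_biletter_toBiword B.2.1 t ((p, i), (q, j))

/-- `BCM_ℓ(ν,μ)` is in bijection with `BW_ℓ(ν,μ)`, where the biletter
with top letter `i_p` and bottom letter `j_q` occurs in the `t`-th biword with multiplicity
the `t`-th part of the composition `b^{(pq)}_{ij}`. -/
theorem bcm_equiv_bw (ℓ n : ℕ) (hℓ : 1 ≤ ℓ) (ν μ : Fin ℓ → List ℕ)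
    (hν : IsMultiComp ℓ n ν) (hμ : IsMultiComp ℓ n μ) :
    ∃ e : ↥(BCM ℓ ν μ) ≃ ↥(BW ℓ ν μ),
      ∀ B : ↥(BCM ℓ ν μ), ∀ (t p q : Fin ℓ) (i j : ℕ),
        ((e B).1 t).count (toLex ((p : ℕ), i), toLex ((q : ℕ), j)) =
          (B.1 p q i j).getD (t : ℕ) 0 :=
  bcm_equiv_bw_general ℓ ν μ
end
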